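/- For x ∈ R^{d-1}, RMSNorm(D(x)) is zero-mean and equals D(CRMSNorm(x)), where D is the decompression map. -/
import Mathlib


/-- RMSNorm(D(x)) is zero-mean and equals D(CRMSNorm(x)). -/
theorem stmt_9 (n : ℕ) (hn : 1 ≤ n) (ε : ℝ) (hε : 0 < ε) (x : Fin n → ℝ) :
    (∑ i, ((Fin.snoc x (-∑ j, x j) : Fin (n + 1) → ℝ) i /
        Real.sqrt ((∑ j, (Fin.snoc x (-∑ j', x j') : Fin (n + 1) → ℝ) j ^ 2) /
          (n + 1 : ℝ) + ε))) = 0 ∧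
    (fun i : Fin (n + 1) =>
        (Fin.snoc x (-∑ j, x j) : Fin (n + 1) → ℝ) i /
          Real.sqrt ((∑ j, (Fin.snoc x (-∑ j', x j') : Fin (n + 1) → ℝ) j ^ 2) /
            (n + 1 : ℝ) + ε)) =
      Fin.snoc
        (fun i : Fin n => x i /
          Real.sqrt (((∑ j, x j ^ 2) + (∑ j, x j) ^ 2) / (n + 1 : ℝ) + ε))
        (-∑ i, x i /
          Real.sqrt (((∑ j, x j ^ 2) + (∑ j, x j) ^ 2) / (n + 1 : ℝ) + ε)) := by
  have hsq : (∑ j, (Fin.snoc x (-∑ j', x j') : Fin (n + 1) → ℝ) j ^ 2)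
      = (∑ j, x j ^ 2) + (∑ j, x j) ^ 2 := by
    rw [Fin.sum_univ_castSucc]
    simp [neg_pow]
  constructor
  · rw [← Finset.sum_div, Fin.sum_univ_castSucc]
    simp
  · funext i
    rw [hsq]
    refine Fin.lastCases ?_ ?_ i
    · simp [neg_div, Finset.sum_div]
    · intro j
      simp
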